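/- arXiv:2605.26920 — 5 statements merged into one kernel-verified Lean document; each statement's English description precedes it below -/
import Mathlib

section
/- For d ≥ 2, m ≥ 1, define V_i = Σ_{k=1}^{d} |e^d_k⟩⟨e^{d+m}_{mod(k+i-2, d+1)+1}| for 1 ≤ i ≤ d+1 and V_i = |J_d⟩⟨e^{d+m}_i| for d+2 ≤ i ≤ d+m, where |J_d⟩ is the all-ones column vector in ℂ^d. Then (1/(d(d+m))) Σ_{i=1}^{d+m} V_i V_i^† = p·I_d/d + (1−p)·J_d/d with p = (d+1)/(d+m), where J_d is the d×d all-ones matrix. -/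
/-!
Each Kraus operator is a submatrix `(1 : Matrix (Fin (d+m)) (Fin (d+m)) ℂ).submatrix f id`, so
`V Vᴴ = 1.submatrix f f`. For the first `d + 1` operators `f` is a cyclic shift, injective on
`Fin d`, giving `V Vᴴ = 1`; for the remaining `m - 1` it is constant, giving the all-ones
matrix. Hence `∑ V Vᴴ = (d + 1) • 1 + (m - 1) • J`, and the claim is scalar arithmetic.
-/

open Matrix Finset

namespace Matrix

variable {l n α : Type*} [DecidableEq n]

theorem one_submatrix_id_mul_conjTranspose [Fintype n] [Semiring α] [StarRing α] (f : l → n) :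
    (1 : Matrix n n α).submatrix f id * ((1 : Matrix n n α).submatrix f id)ᴴ =
      (1 : Matrix n n α).submatrix f f := by
  rw [conjTranspose_submatrix, conjTranspose_one,
    ← submatrix_mul _ _ _ _ _ Function.bijective_id, one_mul]

theorem one_submatrix_const [Zero α] [One α] (i : n) :
    (1 : Matrix n n α).submatrix (fun _ : l => i) (fun _ : l => i) = of fun _ _ => 1 := by
  ext
  simp

end Matrix

theorem Nat.eq_of_add_mod_eq_of_lt {N a b i : ℕ} (ha : a < N) (hb : b < N)
    (h : (a + i) % N = (b + i) % N) : a = b := by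
  have hmod : a ≡ b [MOD N] := Nat.ModEq.add_right_cancel' i h
  rwa [Nat.ModEq, Nat.mod_eq_of_lt ha, Nat.mod_eq_of_lt hb] at hmod

section Kraus

variable (α : Type*) [Semiring α] [StarRing α] (d m : ℕ)

def cyclicShiftKraus (i : ℕ) : Matrix (Fin d) (Fin (d + m)) α :=
  of fun k j => if (j : ℕ) = ((k : ℕ) + i) % (d + 1) then 1 else 0

def rankOneKraus (i : Fin (d + m)) : Matrix (Fin d) (Fin (d + m)) α :=
  of fun _ j => if j = i then 1 else 0

theorem cyclicShiftKraus_mul_conjTranspose (hm : 1 ≤ m) (i : ℕ) :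
    cyclicShiftKraus α d m i * (cyclicShiftKraus α d m i)ᴴ = 1 := by
  let shift (k : Fin d) : Fin (d + m) :=
    ⟨((k : ℕ) + i) % (d + 1), (Nat.mod_lt _ d.succ_pos).trans_le (by omega)⟩
  have hshift : cyclicShiftKraus α d m i = (1 : Matrix _ _ α).submatrix shift id := by
    ext k j
    simp [cyclicShiftKraus, one_apply, shift, Fin.ext_iff, eq_comm]
  have hinj : Function.Injective shift := fun k k' h =>
    Fin.ext (Nat.eq_of_add_mod_eq_of_lt (by omega) (by omega) (Fin.ext_iff.mp h))
  rw [hshift, one_submatrix_id_mul_conjTranspose, submatrix_one _ hinj]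

theorem rankOneKraus_mul_conjTranspose (i : Fin (d + m)) :
    rankOneKraus α d m i * (rankOneKraus α d m i)ᴴ = of fun _ _ => 1 := by
  have h : rankOneKraus α d m i = (1 : Matrix _ _ α).submatrix (fun _ : Fin d => i) id := by
    ext k j
    simp [rankOneKraus, one_apply, eq_comm]
  rw [h, one_submatrix_id_mul_conjTranspose, one_submatrix_const]

end Kraus

theorem sum_ite_val_lt_smul {M : Type*} [AddCommMonoid M] [Module ℂ M] {N c : ℕ} (hc : c ≤ N)
    (A B : M) :
    ∑ i : Fin N, (if (i : ℕ) < c then A else B) = (c : ℂ) • A + ((N : ℂ) - c) • B := by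
  have hcard := card_filter_add_card_filter_not (s := (univ : Finset (Fin N))) (· < c)
  rw [Fin.card_filter_val_lt, card_univ, Fintype.card_fin, min_eq_right hc] at hcard
  have hneg : #{i : Fin N | ¬(i : ℕ) < c} = N - c := by omega
  rw [sum_ite, sum_const, sum_const, Fin.card_filter_val_lt, min_eq_right hc, hneg,
    ← Nat.cast_smul_eq_nsmul ℂ, ← Nat.cast_smul_eq_nsmul ℂ, Nat.cast_sub hc]

/-- Indices are 0-based: `i < d + 1` are the paper's cyclic shifts `V_1, …, V_{d+1}`, since
`mod(k + i - 2, d + 1) + 1` becomes `(k + i) % (d + 1)`, and `i ≥ d + 1` are the rank-one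
operators `V_{d+2}, …, V_{d+m}`. -/
theorem stmt_2_general (d m : ℕ) (hm : 1 ≤ m)
    (V : Fin (d + m) → Matrix (Fin d) (Fin (d + m)) ℂ)
    (hV : ∀ i, V i = if (i : ℕ) < d + 1 then
        Matrix.of (fun (k : Fin d) (j : Fin (d + m)) =>
          if (j : ℕ) = ((k : ℕ) + (i : ℕ)) % (d + 1) then 1 else 0)
      else
        Matrix.of (fun (_ : Fin d) (j : Fin (d + m)) => if j = i then 1 else 0)) :
    (1 / ((d : ℂ) * (d + m))) • ∑ i, V i * (V i)ᴴ =
      (((d : ℂ) + 1) / ((d : ℂ) + m)) • ((d : ℂ)⁻¹ • (1 : Matrix (Fin d) (Fin d) ℂ)) +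
      (1 - ((d : ℂ) + 1) / ((d : ℂ) + m)) •
        ((d : ℂ)⁻¹ • Matrix.of (fun (_ _ : Fin d) => (1 : ℂ))) := by
  have hterm : ∀ i : Fin (d + m), V i * (V i)ᴴ =
      if (i : ℕ) < d + 1 then 1 else of fun _ _ => 1 := fun i => by
    rw [hV]
    split_ifs
    · exact cyclicShiftKraus_mul_conjTranspose ℂ d m hm i
    · exact rankOneKraus_mul_conjTranspose ℂ d m i
  have hdm : (d : ℂ) + m ≠ 0 := by exact_mod_cast (show d + m ≠ 0 by omega)
  simp only [hterm, sum_ite_val_lt_smul (show d + 1 ≤ d + m by omega), smul_add, smul_smul,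
    one_sub_div hdm, one_div, mul_inv]
  push_cast
  congr 2 <;> ring

/-- The Kraus operators of the paper, written with 0-based indices:
for `i < d+1` (i.e. `1 ≤ i ≤ d+1` in 1-based terms),
`V i = Σ_k |e^d_k⟩⟨e^{d+m}_{(k+i) mod (d+1)}|`, and for `i ≥ d+1`
(1-based `i ≥ d+2`), `V i = |J_d⟩⟨e^{d+m}_i|`. -/
theorem stmt_2 (d m : ℕ) (hd : 2 ≤ d) (hm : 1 ≤ m)
    (V : Fin (d + m) → Matrix (Fin d) (Fin (d + m)) ℂ)
    (hV : ∀ i, V i = if (i : ℕ) < d + 1 then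
        Matrix.of (fun (k : Fin d) (j : Fin (d + m)) =>
          if (j : ℕ) = ((k : ℕ) + (i : ℕ)) % (d + 1) then 1 else 0)
      else
        Matrix.of (fun (_ : Fin d) (j : Fin (d + m)) => if j = i then 1 else 0)) :
    (1 / ((d : ℂ) * (d + m))) • ∑ i, V i * (V i)ᴴ =
      (((d : ℂ) + 1) / ((d : ℂ) + m)) • ((d : ℂ)⁻¹ • (1 : Matrix (Fin d) (Fin d) ℂ)) +
      (1 - ((d : ℂ) + 1) / ((d : ℂ) + m)) •
        ((d : ℂ)⁻¹ • Matrix.of (fun (_ _ : Fin d) => (1 : ℂ))) :=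
  stmt_2_general d m hm V hV
end

section
/- For d ≥ 2, m ≥ 1 and V_i defined as: V_i = Σ_{k=1}^{d} |e^d_k⟩⟨e^{d+m}_{mod(k+i-2, d+1)+1}| for 1 ≤ i ≤ d+1, and V_i = |J_d⟩⟨e^{d+m}_i| for d+2 ≤ i ≤ d+m, the identity (1/(d(d+m))) Σ_{i=1}^{d+m} V_i^† V_i = I_{d+m}/(d+m) holds. -/
/-!
Row `k` of `V i` has a single entry `1`, in column `f i k`, where `i ↦ f i k` rotates the
first `d + 1` columns by `k` and fixes the others. Hence `(V i)ᴴ * V i` is the sum of the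
diagonal units at `f i k` over `k`, and since `i ↦ f i k` is a permutation for every `k`,
summing over `i` gives `d • 1`.
-/

open Matrix

def prefixRotation {N : ℕ} (n c : ℕ) (hn : n ≤ N) (i : Fin N) : Fin N :=
  if h : (i : ℕ) < n then ⟨(c + i) % n, (Nat.mod_lt _ (by omega)).trans_le hn⟩ else i

lemma prefixRotation_injective {N : ℕ} (n c : ℕ) (hn : n ≤ N) :
    Function.Injective (prefixRotation n c hn) := by
  intro i i' h
  unfold prefixRotation at h
  split_ifs at h with hi hi'
  · have hmod : c + i ≡ c + i' [MOD n] := Fin.mk.inj h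
    have := Nat.ModEq.add_left_cancel' c hmod
    rwa [Nat.ModEq, Nat.mod_eq_of_lt hi, Nat.mod_eq_of_lt hi', ← Fin.ext_iff] at this
  · have := Nat.mod_lt (c + i) (by omega : 0 < n)
    have := congrArg Fin.val h
    simp only at this
    omega
  · have := Nat.mod_lt (c + i') (by omega : 0 < n)
    have := congrArg Fin.val h
    simp only at this
    omega
  · exact h

lemma sum_conjTranspose_mul_of_bijective {κ ι n R : Type*} [Fintype κ] [Fintype ι]
    [DecidableEq n] [NonAssocSemiring R] [StarRing R]
    (f : κ → ι → n) (hf : ∀ k, Function.Bijective (f · k)) :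
    ∑ i, (of fun k j => if j = f i k then (1 : R) else 0)ᴴ *
        of (fun k j => if j = f i k then (1 : R) else 0) =
      Fintype.card ι • (1 : Matrix n n R) := by
  ext a b
  have hcol : ∀ k, ∑ i, (if a = f i k then (if b = f i k then (1 : R) else 0) else 0) =
      if a = b then 1 else 0 := by
    intro k
    obtain ⟨i₀, rfl⟩ := (hf k).2 a
    rw [Finset.sum_eq_single i₀]
    · simp only [if_true, eq_comm]
    · intro i _ hi
      rw [if_neg fun h => hi ((hf k).1 h.symm)]
    · simp
  simp only [Matrix.sum_apply, mul_apply, conjTranspose_apply, of_apply, Matrix.smul_apply,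
    one_apply, apply_ite star, star_one, star_zero, ite_mul, one_mul, zero_mul]
  rw [Finset.sum_comm, Finset.sum_congr rfl fun k _ => hcol k, Finset.sum_const,
    Finset.card_univ]

/-- Kraus operators as in the paper (0-based indices). -/
theorem stmt_3 (d m : ℕ) (hd : 2 ≤ d) (hm : 1 ≤ m)
    (V : Fin (d + m) → Matrix (Fin d) (Fin (d + m)) ℂ)
    (hV : ∀ i, V i = if (i : ℕ) < d + 1 then
        Matrix.of (fun (k : Fin d) (j : Fin (d + m)) =>
          if (j : ℕ) = ((k : ℕ) + (i : ℕ)) % (d + 1) then 1 else 0)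
      else
        Matrix.of (fun (_ : Fin d) (j : Fin (d + m)) => if j = i then 1 else 0)) :
    (1 / ((d : ℂ) * (d + m))) • ∑ i, (V i)ᴴ * V i =
      ((d : ℂ) + m)⁻¹ • (1 : Matrix (Fin (d + m)) (Fin (d + m)) ℂ) := by
  have hle : d + 1 ≤ d + m := by omega
  have hV' : ∀ i, V i =
      of fun (k : Fin d) j => if j = prefixRotation (d + 1) k hle i then 1 else 0 := by
    intro i
    rw [hV i]
    unfold prefixRotation
    split_ifs <;> ext k j <;> simp [Fin.ext_iff]
  have hd0 : (d : ℂ) ≠ 0 := by exact_mod_cast (by omega : d ≠ 0)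
  have hdm0 : (d : ℂ) + m ≠ 0 := by exact_mod_cast (by omega : d + m ≠ 0)
  simp only [hV']
  rw [sum_conjTranspose_mul_of_bijective (fun i (k : Fin d) => prefixRotation (d + 1) k hle i)
      fun k => Finite.injective_iff_bijective.1 (prefixRotation_injective (d + 1) k hle),
    Fintype.card_fin, ← Nat.cast_smul_eq_nsmul ℂ, smul_smul]
  congr 1
  field_simp
end

section
/- Let A_1 = diag(1/√3, 1) and A_2 be the 2×2 matrix with zero diagonal and both off-diagonal entries 1/√3. Then (1/2)(A_1^† A_1 + A_2^† A_2) = (1/2)(A_1 A_1^† + A_2 A_2^†) = diag(1/3, 2/3), and the four matrices {A_i^† A_j : 1 ≤ i, j ≤ 2} are linearly independent in M_2(ℂ). -/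
/-! Both matrices are Hermitian, so the two averages coincide and only `A₁² + A₂²` has to be
computed. The four products `A_i A_j` are two diagonal and two antidiagonal matrices; each pair
is independent because the corresponding `2 × 2` determinant is `1/9 - 1/3 ≠ 0`. -/

open Matrix

noncomputable def A8 : Fin 2 → Matrix (Fin 2) (Fin 2) ℂ :=
  ![!![((Real.sqrt 3 : ℝ) : ℂ)⁻¹, 0; 0, 1],
    !![0, ((Real.sqrt 3 : ℝ) : ℂ)⁻¹; ((Real.sqrt 3 : ℝ) : ℂ)⁻¹, 0]]

theorem eq_zero_and_eq_zero_of_det_ne_zero {K : Type*} [Field K] {a b c d x y : K}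
    (hdet : a * d - b * c ≠ 0) (h₁ : x * a + y * c = 0) (h₂ : x * b + y * d = 0) :
    x = 0 ∧ y = 0 :=
  ⟨mul_right_cancel₀ hdet (by linear_combination d * h₁ - c * h₂),
    mul_right_cancel₀ hdet (by linear_combination a * h₂ - b * h₁)⟩

theorem linearIndependent_diagonal_antidiagonal {K : Type*} [Field K] {a b c d e f g h : K}
    (hdiag : a * d - b * c ≠ 0) (hanti : e * h - f * g ≠ 0) :
    LinearIndependent K (fun p : Fin 2 × Fin 2 =>
      ![![!![a, 0; 0, b], !![0, e; f, 0]], ![!![0, g; h, 0], !![c, 0; 0, d]]] p.1 p.2) := by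
  rw [Fintype.linearIndependent_iff]
  intro x hx
  rw [Fintype.sum_prod_type] at hx
  have e00 : x (0, 0) * a + x (1, 1) * c = 0 := by simpa using congrFun (congrFun hx 0) 0
  have e11 : x (0, 0) * b + x (1, 1) * d = 0 := by simpa using congrFun (congrFun hx 1) 1
  have e01 : x (0, 1) * e + x (1, 0) * g = 0 := by simpa using congrFun (congrFun hx 0) 1
  have e10 : x (0, 1) * f + x (1, 0) * h = 0 := by simpa using congrFun (congrFun hx 1) 0
  obtain ⟨h00, h11⟩ := eq_zero_and_eq_zero_of_det_ne_zero hdiag e00 e11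
  obtain ⟨h01, h10⟩ := eq_zero_and_eq_zero_of_det_ne_zero hanti e01 e10
  rintro ⟨i, j⟩
  fin_cases i <;> fin_cases j <;> assumption

local notation "s₃" => ((Real.sqrt 3 : ℝ) : ℂ)⁻¹

theorem inv_sqrt_three_mul_self : s₃ * s₃ = 1 / 3 := by
  rw [← mul_inv, ← Complex.ofReal_mul, Real.mul_self_sqrt (by norm_num)]
  norm_num

theorem isHermitian_A8 (i : Fin 2) : (A8 i).IsHermitian := by
  ext j k
  fin_cases i <;> fin_cases j <;> fin_cases k <;> simp [A8, Complex.conj_ofReal]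

theorem A8_mul_A8 (i j : Fin 2) :
    A8 i * A8 j = ![![!![1/3, 0; 0, 1], !![0, 1/3; s₃, 0]],
      ![!![0, s₃; 1/3, 0], !![1/3, 0; 0, 1/3]]] i j := by
  fin_cases i <;> fin_cases j <;> simp [A8, inv_sqrt_three_mul_self]

theorem stmt_8 :
    (1 / 2 : ℂ) • ((A8 0)ᴴ * A8 0 + (A8 1)ᴴ * A8 1) = !![(1/3 : ℂ), 0; 0, 2/3] ∧
    (1 / 2 : ℂ) • (A8 0 * (A8 0)ᴴ + A8 1 * (A8 1)ᴴ) = !![(1/3 : ℂ), 0; 0, 2/3] ∧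
    LinearIndependent ℂ (fun p : Fin 2 × Fin 2 => (A8 p.1)ᴴ * A8 p.2) := by
  have hsum : (1 / 2 : ℂ) • (A8 0 * A8 0 + A8 1 * A8 1) = !![(1/3 : ℂ), 0; 0, 2/3] := by
    simp only [A8_mul_A8]
    ext i j
    fin_cases i <;> fin_cases j <;> norm_num
  simp only [(isHermitian_A8 _).eq]
  refine ⟨hsum, hsum, ?_⟩
  simp only [A8_mul_A8]
  exact linearIndependent_diagonal_antidiagonal (by norm_num)
    (by rw [inv_sqrt_three_mul_self]; norm_num)
end

section
/- Given d ≥ 3, let V_1 = √((d−2)/(d−1)) Σ_{j=2}^{d} E_{jj} and V_k = (1/√(d−1))(E_{1k} + E_{k1}) for 2 ≤ k ≤ d in M_d(ℂ). Then Σ_{j=1}^{d} V_j² = I_d, each V_j is Hermitian, and the d² block-diagonal matrices diag(V_i V_j, V_j V_i) for 1 ≤ i, j ≤ d are linearly independent over ℂ. -/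
/-!
Write `E = E₀₀` and `P = 1 - E`, so that `V₀ = c P` and `Vₖ = s (E₀ₖ + Eₖ₀)` for `k ≠ 0`, with
`c² + s² = 1` and `(d - 1) s² = 1`. The products are `V₀² = c² P`, `V₀ Vₖ = cs Eₖ₀`,
`Vₖ V₀ = cs E₀ₖ`, `Vₖ Vₗ = s² Eₖₗ` and `Vₖ² = s² (E + Eₖₖ)` (`k ≠ l` nonzero). Since `c, s ≠ 0`,
every matrix unit is a combination of them, `E` coming from `∑ Vⱼ²` and `V₀²`.
So the `d²` products span `M_d(ℂ)` and are therefore linearly independent, which already forces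
the block matrices `diag(Vᵢ Vⱼ, Vⱼ Vᵢ)` to be independent through their upper-left blocks.
-/

open Matrix

theorem Matrix.linearIndependent_fromBlocks_of_left {ι R l m n o : Type*} [Semiring R]
    {A : ι → Matrix n l R} (B : ι → Matrix n m R) (C : ι → Matrix o l R)
    (D : ι → Matrix o m R) (hA : LinearIndependent R A) :
    LinearIndependent R fun i => fromBlocks (A i) (B i) (C i) (D i) :=
  LinearIndependent.of_comp
    { toFun := toBlocks₁₁, map_add' := fun _ _ => rfl, map_smul' := fun _ _ => rfl } hA

section StarFamily

variable {n : Type*} [DecidableEq n] (o : n)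

section CommRing

variable {R : Type*} [CommRing R] (c s : R)

def starFamily (k : n) : Matrix n n R :=
  if k = o then c • (1 - single o o 1) else s • (single o k 1 + single k o 1)

theorem starFamily_center : starFamily o c s o = c • (1 - single o o 1) := if_pos rfl

theorem starFamily_of_ne {k : n} (hk : k ≠ o) :
    starFamily o c s k = s • (single o k 1 + single k o 1) := if_neg hk

theorem conjTranspose_starFamily [StarRing R] (hc : star c = c) (hs : star s = s) (k : n) :
    (starFamily o c s k)ᴴ = starFamily o c s k := by
  unfold starFamily
  split_ifs
  · simp [hc]
  · simp [hs, add_comm]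

variable [Fintype n]

theorem starFamily_center_mul_self :
    starFamily o c s o * starFamily o c s o = (c * c) • (1 - single o o 1) := by
  simp [starFamily_center, smul_smul, sub_mul, mul_sub, single_mul_single_same]

theorem starFamily_center_mul {k : n} (hk : k ≠ o) :
    starFamily o c s o * starFamily o c s k = (c * s) • single k o 1 := by
  simp [starFamily_center, starFamily_of_ne o c s hk, sub_mul, mul_add, single_mul_single_same,
    single_mul_single_of_ne, hk.symm]

theorem starFamily_mul_center {k : n} (hk : k ≠ o) :
    starFamily o c s k * starFamily o c s o = (c * s) • single o k 1 := by
  simp [starFamily_center, starFamily_of_ne o c s hk, mul_sub, add_mul, single_mul_single_same,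
    single_mul_single_of_ne, hk]

theorem starFamily_mul_self_of_ne {k : n} (hk : k ≠ o) :
    starFamily o c s k * starFamily o c s k = (s * s) • (single o o 1 + single k k 1) := by
  simp [starFamily_of_ne o c s hk, add_mul, mul_add,
    single_mul_single_same, single_mul_single_of_ne, hk, hk.symm, add_comm]

theorem starFamily_mul_of_ne {k l : n} (hk : k ≠ o) (hl : l ≠ o) (hkl : k ≠ l) :
    starFamily o c s k * starFamily o c s l = (s * s) • single k l 1 := by
  simp [starFamily_of_ne o c s hk, starFamily_of_ne o c s hl, add_mul, mul_add,
    single_mul_single_same, single_mul_single_of_ne, hk, hl.symm, hkl]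

theorem sum_single_erase_self :
    ∑ k ∈ Finset.univ.erase o, single k k (1 : R) = 1 - single o o 1 := by
  rw [eq_sub_iff_add_eq, Finset.sum_erase_add _ _ (Finset.mem_univ o), sum_single_one]

theorem sum_starFamily_mul_self :
    ∑ k, starFamily o c s k * starFamily o c s k =
      (c * c + s * s) • (1 - single o o 1) +
        ((Fintype.card n - 1 : R) * (s * s)) • single o o 1 := by
  rw [← Finset.add_sum_erase _ _ (Finset.mem_univ o), starFamily_center_mul_self,
    Finset.sum_congr rfl fun k hk => starFamily_mul_self_of_ne o c s (Finset.ne_of_mem_erase hk),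
    ← Finset.smul_sum, Finset.sum_add_distrib, sum_single_erase_self, Finset.sum_const,
    Finset.card_erase_of_mem (Finset.mem_univ o), Finset.card_univ,
    ← Nat.cast_smul_eq_nsmul R, Nat.cast_pred (Fintype.card_pos_iff.2 ⟨o⟩)]
  module

end CommRing

section Field

variable {K : Type*} [Field K] [Fintype n] {c s : K}

theorem span_starFamily_mul_eq_top (hc : c ≠ 0) (hs : s ≠ 0)
    (hn : (Fintype.card n - 1 : K) ≠ 0) :
    Submodule.span K (Set.range fun p : n × n => starFamily o c s p.1 * starFamily o c s p.2) =
      ⊤ := by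
  set W := Submodule.span K
    (Set.range fun p : n × n => starFamily o c s p.1 * starFamily o c s p.2)
  have mem (i j : n) : starFamily o c s i * starFamily o c s j ∈ W :=
    Submodule.subset_span ⟨(i, j), rfl⟩
  have center : single o o 1 ∈ W := by
    -- `(card n - 1) s² • E_oo = ∑ₖ Vₖ² - ((c² + s²) / c²) • V_o²`
    have hsum := sub_mem (W.sum_mem (t := Finset.univ) fun k _ => mem k k)
      (W.smul_mem ((c * c + s * s) / (c * c)) (mem o o))
    rw [sum_starFamily_mul_self, starFamily_center_mul_self, smul_smul,
      div_mul_cancel₀ _ (mul_ne_zero hc hc), add_sub_cancel_left] at hsum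
    exact (W.smul_mem_iff (mul_ne_zero hn (mul_ne_zero hs hs))).1 hsum
  have single_mem (a b : n) : single a b 1 ∈ W := by
    rcases eq_or_ne o a with rfl | ha <;> rcases eq_or_ne o b with rfl | hb
    · exact center
    · exact (W.smul_mem_iff (mul_ne_zero hc hs)).1
        (starFamily_mul_center o c s hb.symm ▸ mem b o)
    · exact (W.smul_mem_iff (mul_ne_zero hc hs)).1
        (starFamily_center_mul o c s ha.symm ▸ mem o a)
    · rcases eq_or_ne a b with rfl | hab
      · exact (W.add_mem_iff_right center).1 <| (W.smul_mem_iff (mul_ne_zero hs hs)).1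
          (starFamily_mul_self_of_ne o c s ha.symm ▸ mem a a)
      · exact (W.smul_mem_iff (mul_ne_zero hs hs)).1
          (starFamily_mul_of_ne o c s ha.symm hb.symm hab ▸ mem a b)
  refine eq_top_iff.2 fun M _ => ?_
  rw [matrix_eq_sum_single M]
  refine Submodule.sum_mem W fun a _ => Submodule.sum_mem W fun b _ => ?_
  simpa [smul_single] using W.smul_mem (M a b) (single_mem a b)

theorem linearIndependent_starFamily_mul (hc : c ≠ 0) (hs : s ≠ 0)
    (hn : (Fintype.card n - 1 : K) ≠ 0) :
    LinearIndependent K fun p : n × n => starFamily o c s p.1 * starFamily o c s p.2 :=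
  linearIndependent_of_top_le_span_of_card_eq_finrank (span_starFamily_mul_eq_top o hc hs hn).ge
    (by simp [Module.finrank_matrix])

end Field

end StarFamily

theorem eq_starFamily_of_apply {R : Type*} [CommRing R] {d : ℕ} (hd : 0 < d) {c s : R}
    {V : Fin d → Matrix (Fin d) (Fin d) R}
    (hV : ∀ i, V i = if (i : ℕ) = 0 then
        c • of (fun (a b : Fin d) => if a = b ∧ (a : ℕ) ≠ 0 then 1 else 0)
      else
        s • (of (fun (a b : Fin d) => if (a : ℕ) = 0 ∧ b = i then 1 else 0) +
          of (fun (a b : Fin d) => if a = i ∧ (b : ℕ) = 0 then 1 else 0))) :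
    V = starFamily ⟨0, hd⟩ c s := by
  set o : Fin d := ⟨0, hd⟩
  have hzero (a : Fin d) : (a : ℕ) = 0 ↔ a = o := by simp [o, Fin.ext_iff]
  ext i : 1
  by_cases hi : i = o
  · subst hi
    rw [hV, if_pos rfl, starFamily_center]
    congr 1
    ext a b
    by_cases hab : a = b <;> by_cases hb : b = o <;>
      simp [hzero, one_apply, single_apply, hab, hb, eq_comm]
  · rw [hV, if_neg ((hzero i).not.2 hi), starFamily_of_ne o c s hi]
    congr 1
    ext a b
    simp [hzero, single_apply, eq_comm]

-- Indices are 0-based: `V 0` is the paper's `V_1`.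
/-- Statement 11, with 0-based indices: `V 0 = √((d−2)/(d−1)) Σ_{j≠0} E_{jj}` and
`V k = (1/√(d−1))(E_{0k} + E_{k0})` for `k ≠ 0`. -/
theorem stmt_11 (d : ℕ) (hd : 3 ≤ d) (V : Fin d → Matrix (Fin d) (Fin d) ℂ)
    (hV : ∀ i, V i = if (i : ℕ) = 0 then
        ((Real.sqrt (((d : ℝ) - 2) / ((d : ℝ) - 1)) : ℝ) : ℂ) •
          Matrix.of (fun (a b : Fin d) => if a = b ∧ (a : ℕ) ≠ 0 then 1 else 0)
      else
        (((Real.sqrt ((d : ℝ) - 1) : ℝ) : ℂ))⁻¹ •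
          (Matrix.of (fun (a b : Fin d) => if (a : ℕ) = 0 ∧ b = i then 1 else 0) +
           Matrix.of (fun (a b : Fin d) => if a = i ∧ (b : ℕ) = 0 then 1 else 0))) :
    (∑ j, V j * V j) = 1 ∧ (∀ j, (V j)ᴴ = V j) ∧
    LinearIndependent ℂ (fun p : Fin d × Fin d =>
      Matrix.fromBlocks (V p.1 * V p.2) 0 0 (V p.2 * V p.1)) := by
  set c : ℂ := (√(((d : ℝ) - 2) / ((d : ℝ) - 1)) : ℂ)
  set s : ℂ := ((√((d : ℝ) - 1) : ℝ) : ℂ)⁻¹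
  obtain rfl := eq_starFamily_of_apply (by omega) hV
  have hd1 : (1 : ℝ) < d - 1 := by
    have : (3 : ℝ) ≤ d := by exact_mod_cast hd
    linarith
  have hcc : c * c = ((d : ℂ) - 2) / ((d : ℂ) - 1) := by
    rw [← Complex.ofReal_mul, Real.mul_self_sqrt (div_nonneg (by linarith) (by linarith))]
    push_cast; rfl
  have hss : s * s = ((d : ℂ) - 1)⁻¹ := by
    rw [← mul_inv, ← Complex.ofReal_mul, Real.mul_self_sqrt (by linarith)]
    push_cast; rfl
  have hd1_ne : (d : ℂ) - 1 ≠ 0 := sub_ne_zero.2 (by exact_mod_cast (by omega : d ≠ 1))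
  have hd2_ne : (d : ℂ) - 2 ≠ 0 := sub_ne_zero.2 (by exact_mod_cast (by omega : d ≠ 2))
  have hc : c ≠ 0 := left_ne_zero_of_mul (hcc ▸ div_ne_zero hd2_ne hd1_ne)
  have hs : s ≠ 0 := left_ne_zero_of_mul (hss ▸ inv_ne_zero hd1_ne)
  refine ⟨?_, conjTranspose_starFamily _ c s (by simp [c]) (by simp [s]), ?_⟩
  · have hsq : ((d : ℂ) - 2) / ((d : ℂ) - 1) + ((d : ℂ) - 1)⁻¹ = 1 := by field_simp; ring
    rw [sum_starFamily_mul_self, Fintype.card_fin, hcc, hss, hsq, mul_inv_cancel₀ hd1_ne, one_smul,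
      one_smul, sub_add_cancel]
  · exact linearIndependent_fromBlocks_of_left _ _ _
      (linearIndependent_starFamily_mul _ hc hs (by simpa using hd1_ne))
end

section
/- Let d ≥ 2, m ≥ 1, and define ρ = (1/(d(d+m))) [ Σ_{i=1}^{d+1} Σ_{r,s=1}^{d} |e^d_r ⊗ e^{d+m}_{mod(r+i−2,d+1)+1}⟩⟨e^d_s ⊗ e^{d+m}_{mod(s+i−2,d+1)+1}| + J_d ⊗ (0_{d+1} ⊕ I_{m−1}) ]. Then the partial transpose of ρ in the first tensor factor, ρ^{T_1}, is positive semidefinite. -/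
/-!
Summing over `r, s` turns the first part of `ρ` into `∑ᵢ |wᵢ⟩⟨wᵢ|`, where `wᵢ` is the indicator
of the graph of `a ↦ a + i`, computed in `Fin (d + 1)` and placed in the first `d + 1` levels of
the second factor. Entrywise, the partial transpose of `∑ᵢ |wᵢ⟩⟨wᵢ|` becomes, after the
reindexing `i ↦ i + a + a'`, the sum `∑ᵢ |w'ᵢ⟩⟨w'ᵢ|` with `w'ᵢ` the indicator of the graph of
`a ↦ -a + i`, so it is again a sum of positive rank-one matrices. The other part `J_d ⊗ D` has
partial transpose `J_dᵀ ⊗ D = J_d ⊗ D`, a Kronecker product of positive semidefinite matrices.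
-/

open Matrix Kronecker ComplexOrder

noncomputable def outer {ι : Type*} (u v : ι → ℂ) : Matrix ι ι ℂ :=
  Matrix.of fun a b => u a * (starRingEnd ℂ) (v b)

/-- `e^d_r ⊗ e^{d+m}_{(r+i) mod (d+1)}` (0-based indices). -/
noncomputable def tv (d m : ℕ) (i : Fin (d + 1)) (r : Fin d) : Fin d × Fin (d + m) → ℂ :=
  fun p => (if p.1 = r then 1 else 0) *
    (if (p.2 : ℕ) = ((r : ℕ) + (i : ℕ)) % (d + 1) then 1 else 0)

namespace Matrix

variable {α β R : Type*} [Semiring R]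

def partialTranspose : Matrix (α × β) (α × β) R →ₗ[R] Matrix (α × β) (α × β) R where
  toFun M := of fun p q => M (q.1, p.2) (p.1, q.2)
  map_add' _ _ := rfl
  map_smul' _ _ := rfl

@[simp]
lemma partialTranspose_apply (M : Matrix (α × β) (α × β) R) (p q : α × β) :
    partialTranspose M p q = M (q.1, p.2) (p.1, q.2) := rfl

lemma partialTranspose_kronecker (A : Matrix α α R) (B : Matrix β β R) :
    partialTranspose (A ⊗ₖ B) = Aᵀ ⊗ₖ B := rfl

end Matrix

section

variable {ι κ α β G : Type*}

lemma posSemidef_outer_self [Finite ι] (v : ι → ℂ) : (outer v v).PosSemidef :=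
  posSemidef_vecMulVec_self_star v

lemma outer_sum_sum [Fintype κ] (u v : κ → ι → ℂ) :
    outer (∑ r, u r) (∑ s, v s) = ∑ r, ∑ s, outer (u r) (v s) := by
  ext a b
  simp [outer, Matrix.sum_apply, Finset.sum_mul_sum]

lemma posSemidef_ones [Finite ι] : (of fun _ _ : ι => (1 : ℂ)).PosSemidef := by
  simpa [outer] using posSemidef_outer_self (fun _ : ι => (1 : ℂ))

lemma posSemidef_ite_eq_and [DecidableEq β] [Finite β] (P : β → Prop) [DecidablePred P] :
    (of fun a b : β => if a = b ∧ P a then (1 : ℂ) else 0).PosSemidef := by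
  have : Fintype β := Fintype.ofFinite β
  convert PosSemidef.diagonal (d := fun a => if P a then (1 : ℂ) else 0) fun a => by
    dsimp; split_ifs <;> norm_num
  ext a b
  by_cases h : a = b <;> simp [h]

noncomputable def graphIndicator [DecidableEq β] (g : α → β) : α × β → ℂ :=
  fun p => if p.2 = g p.1 then 1 else 0

theorem partialTranspose_sum_outer_graphIndicator [DecidableEq β] [AddCommGroup G] [Fintype G]
    (e : G → β) (f : α → G) :
    partialTranspose (∑ i, outer (graphIndicator fun a => e (f a + i))
        (graphIndicator fun a => e (f a + i)))
      = ∑ i, outer (graphIndicator fun a => e (-f a + i))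
          (graphIndicator fun a => e (-f a + i)) := by
  ext p q
  simp only [partialTranspose_apply, Matrix.sum_apply, outer, of_apply, graphIndicator]
  refine Fintype.sum_equiv (Equiv.addRight (f p.1 + f q.1)) _ _ fun i => ?_
  simp only [Equiv.coe_addRight, show -f p.1 + (i + (f p.1 + f q.1)) = f q.1 + i by abel,
    show -f q.1 + (i + (f p.1 + f q.1)) = f p.1 + i by abel]

end

lemma sum_tv_eq_graphIndicator {d m : ℕ} (hm : 1 ≤ m) (i : Fin (d + 1)) :
    ∑ r, tv d m i r = graphIndicator fun a : Fin d => Fin.castLE (by omega) (a.castSucc + i) := by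
  funext p
  simp only [Finset.sum_apply, tv, ite_mul, one_mul, zero_mul, Finset.sum_ite_eq, Finset.mem_univ,
    if_true]
  simp only [graphIndicator, Fin.ext_iff, Fin.val_castLE, Fin.val_add, Fin.val_castSucc]

theorem stmt_13_general (d m : ℕ) (hm : 1 ≤ m)
    (ρ : Matrix (Fin d × Fin (d + m)) (Fin d × Fin (d + m)) ℂ)
    (hρ : ρ = (1 / ((d : ℂ) * (d + m))) •
      (∑ i : Fin (d + 1), ∑ r : Fin d, ∑ s : Fin d, outer (tv d m i r) (tv d m i s)
        + (Matrix.of fun (_ _ : Fin d) => (1 : ℂ)) ⊗ₖ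
            (Matrix.of fun (a b : Fin (d + m)) =>
              if a = b ∧ d + 1 ≤ (a : ℕ) then 1 else 0))) :
    (Matrix.of fun (p q : Fin d × Fin (d + m)) => ρ (q.1, p.2) (p.1, q.2)).PosSemidef := by
  have hcoef : (0 : ℂ) ≤ 1 / ((d : ℂ) * (d + m)) := by
    rw [show (1 : ℂ) / ((d : ℂ) * (d + m)) = ((1 / ((d : ℝ) * (d + m)) : ℝ) : ℂ) by push_cast; rfl]
    exact Complex.zero_le_real.mpr (by positivity)
  change (partialTranspose ρ).PosSemidef
  rw [hρ, map_smul, map_add, partialTranspose_kronecker]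
  refine PosSemidef.smul (PosSemidef.add ?_ ?_) hcoef
  · simp_rw [← outer_sum_sum, sum_tv_eq_graphIndicator hm,
      partialTranspose_sum_outer_graphIndicator]
    exact posSemidef_sum _ fun i _ => posSemidef_outer_self _
  · exact posSemidef_ones.kronecker (posSemidef_ite_eq_and _)

/-- the partial transpose (in the first factor) of the Choi state `ρ`
is positive semidefinite. -/
theorem stmt_13 (d m : ℕ) (hd : 2 ≤ d) (hm : 1 ≤ m)
    (ρ : Matrix (Fin d × Fin (d + m)) (Fin d × Fin (d + m)) ℂ)
    (hρ : ρ = (1 / ((d : ℂ) * (d + m))) •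
      (∑ i : Fin (d + 1), ∑ r : Fin d, ∑ s : Fin d, outer (tv d m i r) (tv d m i s)
        + (Matrix.of fun (_ _ : Fin d) => (1 : ℂ)) ⊗ₖ
            (Matrix.of fun (a b : Fin (d + m)) =>
              if a = b ∧ d + 1 ≤ (a : ℕ) then 1 else 0))) :
    (Matrix.of fun (p q : Fin d × Fin (d + m)) => ρ (q.1, p.2) (p.1, q.2)).PosSemidef :=
  stmt_13_general d m hm ρ hρ
end
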